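/- arXiv:1303.5846 — 6 statements merged into one kernel-verified Lean document; each statement's English description precedes it below -/
import Mathlib

section
/- Let g ≥ 1 and let Q be a positive definite real symmetric g×g matrix whose set of minimal vectors S = {x ∈ ℤ^g \ {0} : xᵀQx = m(Q)} spans ℝ^g. If the real linear span of {p(x) : x ∈ S} has dimension at most g + 2, then the set {p(x) : x ∈ S} is linearly independent over ℝ (i.e., the perfect cone spanned by the p(x) is simplicial). -/
open Matrix

/-- `p v = v vᵀ`, the rank-one symmetric matrix associated to a vector `v`. -/
def rankOneForm {d : ℕ} {R : Type*} [CommRing R] (v : Fin d → R) :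
    Matrix (Fin d) (Fin d) R :=
  vecMulVec v v

/-- The coercion of an integer vector to a real vector. -/
def castVec {d : ℕ} (x : Fin d → ℤ) : Fin d → ℝ := fun i => (x i : ℝ)

/-- The value `xᵀ Q x` of the quadratic form given by `Q` at an integer vector `x`. -/
def quadVal {d : ℕ} (Q : Matrix (Fin d) (Fin d) ℝ) (x : Fin d → ℤ) : ℝ :=
  castVec x ⬝ᵥ Q.mulVec (castVec x)

/-- The set of minimal vectors of `Q`: the nonzero integer vectors attaining the
arithmetical minimum `m(Q) = min {xᵀQx : x ∈ ℤᵈ, x ≠ 0}`. -/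
def MinimalVectors {d : ℕ} (Q : Matrix (Fin d) (Fin d) ℝ) : Set (Fin d → ℤ) :=
  {x | x ≠ 0 ∧ ∀ y : Fin d → ℤ, y ≠ 0 → quadVal Q x ≤ quadVal Q y}

/-! Take a linear relation `∑ λₓ p(x) = 0` of minimal support among the rank-one forms of minimal
vectors, and pair it with suitable matrices. Pairing with `Q` gives `∑ λₓ = 0`. For minimal vectors
`x ≠ ±y` one has `|xᵀQy| ≤ m(Q)/2` (compare `Q[x ± y] ≥ m(Q)`), so pairing with `(Qy)(Qy)ᵀ` bounds
every coefficient by a quarter of the total negative mass: at least four coefficients are positive.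
Pairing with `ccᵀ` for a functional `c` vanishing on the span `W` of the vectors with nonpositive
coefficients shows that all vectors occurring in the relation lie in `W`. Minimal vectors whose
images form a basis of `ℝᵍ ⧸ W` then contribute rank-one forms that are independent modulo those of
the relation, so the span of all `p(x)` has dimension at least
`(k - 1) + (g - #{λₓ ≤ 0}) = g + #{λₓ > 0} - 1 ≥ g + 3`, where `k` is the size of the support. -/

open Finset Module Submodule

section LinearAlgebra

theorem exists_circuit_of_not_linearIndependent {ι R M : Type*} [DecidableEq ι] [Ring R]
    [AddCommGroup M] [Module R M] {v : ι → M} (h : ¬LinearIndependent R v) :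
    ∃ l : ι →₀ R, l ≠ 0 ∧ Finsupp.linearCombination R v l = 0 ∧
      ∀ i ∈ l.support, LinearIndepOn R v ↑(l.support.erase i) := by
  rw [linearIndependent_iff] at h
  push Not at h
  obtain ⟨l, ⟨hrel, hl0⟩, hmin⟩ := (measure fun l : ι →₀ R => #l.support).wf.has_min
    {l | Finsupp.linearCombination R v l = 0 ∧ l ≠ 0} h
  refine ⟨l, hl0, hrel, fun i hi => linearIndepOn_iff.mpr fun l' hl' hrel' => ?_⟩
  by_contra hl'0
  refine hmin l' ⟨hrel', hl'0⟩ ((card_le_card fun j hj => ?_).trans_lt (card_erase_lt_of_mem hi))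
  exact mem_coe.mp (Finsupp.mem_supported _ _ |>.mp hl' (mem_coe.mpr hj))

theorem linearIndependent_sum_elim_of_dual {ι κ R M : Type*} [Fintype ι] [Fintype κ]
    [DecidableEq κ] [CommRing R] [AddCommGroup M] [Module R M] {v : ι → M} {w : κ → M}
    (hv : LinearIndependent R v) (f : κ → Dual R M) (hfv : ∀ k i, f k (v i) = 0)
    (hfw : ∀ k k', f k (w k') = if k = k' then 1 else 0) :
    LinearIndependent R (Sum.elim v w) := by
  rw [Fintype.linearIndependent_iff] at hv ⊢
  intro a ha
  rw [Fintype.sum_sum_type] at ha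
  simp only [Sum.elim_inl, Sum.elim_inr] at ha
  have hw : ∀ k, a (Sum.inr k) = 0 := fun k => by
    simpa [map_sum, hfv, hfw] using congrArg (f k) ha
  simp only [hw, zero_smul, sum_const_zero, add_zero] at ha
  rintro (i | k)
  · exact hv _ ha i
  · exact hw k

theorem exists_biorthogonal_of_span_eq_top {K V : Type*} [Field K] [AddCommGroup V]
    [Module K V] [FiniteDimensional K V] {X : Set V} (hX : span K X = ⊤)
    (W : Submodule K V) :
    ∃ (z : Fin (finrank K (V ⧸ W)) → V) (f : Fin (finrank K (V ⧸ W)) → Dual K V),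
      (∀ i, z i ∈ X) ∧ (∀ i, W ≤ LinearMap.ker (f i)) ∧
        ∀ i j, f i (z j) = if i = j then 1 else 0 := by
  have hspan : ⊤ ≤ span K (W.mkQ '' X) := by
    rw [span_image, hX, Submodule.map_top, range_mkQ]
  let b₀ := Basis.ofSpan hspan
  let b := b₀.reindex (b₀.indexEquiv (finBasis K (V ⧸ W)))
  have hbX : ∀ i, b i ∈ W.mkQ '' X := fun i =>
    Basis.ofSpan_subset hspan (by simp [b, b₀])
  choose z hzX hz using hbX
  refine ⟨z, fun i => (b.coord i).comp W.mkQ, hzX, fun i w hw => ?_, fun i j => ?_⟩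
  · simp [(Quotient.mk_eq_zero W).mpr hw]
  · simp [hz, Finsupp.single_apply, eq_comm]

end LinearAlgebra

section MatrixPairings

variable {ι n R : Type*} [Fintype n] [CommRing R]

theorem dotProductEquiv_symm_dotProduct [DecidableEq n]
    (f : Dual R (n → R)) (v : n → R) : (dotProductEquiv R n).symm f ⬝ᵥ v = f v :=
  congrArg (· v) ((dotProductEquiv R n).apply_symm_apply f)

theorem trace_mul_vecMulVec_self (N : Matrix n n R) (u : n → R) :
    trace (N * vecMulVec u u) = u ⬝ᵥ N *ᵥ u := by
  rw [mul_vecMulVec, trace_vecMulVec, dotProduct_comm]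

theorem trace_vecMulVec_mul_vecMulVec_self (c u : n → R) :
    trace (vecMulVec c c * vecMulVec u u) = (c ⬝ᵥ u) ^ 2 := by
  rw [vecMulVec_mul_vecMulVec, trace_vecMulVec, dotProduct_smul, smul_eq_mul, sq]

theorem sum_mul_trace_mul_eq_zero {T : Finset ι} {l : ι → R}
    {M : ι → Matrix n n R} (hrel : ∑ i ∈ T, l i • M i = 0) (N : Matrix n n R) :
    ∑ i ∈ T, l i * trace (N * M i) = 0 := by
  simpa [Matrix.mul_sum, trace_sum] using congrArg (fun A => trace (N * A)) hrel

theorem Matrix.IsSymm.dotProduct_mulVec_comm {Q : Matrix n n R} (hQ : Q.IsSymm) (a b : n → R) :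
    a ⬝ᵥ Q *ᵥ b = b ⬝ᵥ Q *ᵥ a := by
  rw [dotProduct_mulVec, ← mulVec_transpose, hQ.eq, dotProduct_comm]

end MatrixPairings

theorem card_add_finrank_quotient_le_finrank_span_vecMulVec {ι n K : Type*} [Fintype ι]
    [Fintype n] [DecidableEq n] [Field K] {X : Set (n → K)} (hX : span K X = ⊤)
    (W : Submodule K (n → K)) (u : ι → n → K) (huX : ∀ i, u i ∈ X) (huW : ∀ i, u i ∈ W)
    (hu : LinearIndependent K fun i => vecMulVec (u i) (u i)) :
    Fintype.card ι + finrank K ((n → K) ⧸ W) ≤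
      finrank K (span K ((fun v => vecMulVec v v) '' X)) := by
  obtain ⟨z, f, hzX, hfW, hfz⟩ := exists_biorthogonal_of_span_eq_top hX W
  let F : Fin (finrank K ((n → K) ⧸ W)) → Dual K (Matrix n n K) := fun k =>
    traceLinearMap n K K ∘ₗ LinearMap.mulLeft K
      (vecMulVec ((dotProductEquiv K n).symm (f k)) ((dotProductEquiv K n).symm (f k)))
  have hF : ∀ k v, F k (vecMulVec v v) = f k v ^ 2 := fun k v => by
    simp [F, trace_vecMulVec_mul_vecMulVec_self, dotProductEquiv_symm_dotProduct]
  have hind := linearIndependent_sum_elim_of_dual (w := fun k => vecMulVec (z k) (z k)) hu F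
    (fun k i => by rw [hF, hfW k (huW i), zero_pow two_ne_zero])
    (fun k k' => by rw [hF, hfz]; split_ifs <;> norm_num)
  calc Fintype.card ι + finrank K ((n → K) ⧸ W)
      = finrank K (span K (Set.range (Sum.elim (fun i => vecMulVec (u i) (u i))
          fun k => vecMulVec (z k) (z k)))) := by
        rw [finrank_span_eq_card hind, Fintype.card_sum, Fintype.card_fin]
    _ ≤ finrank K (span K ((fun v => vecMulVec v v) '' X)) := by
        refine finrank_mono (span_mono ?_)
        rintro _ ⟨i | k, rfl⟩
        · exact ⟨u i, huX i, rfl⟩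
        · exact ⟨z k, hzX k, rfl⟩

section RankOneRelations

variable {ι n : Type*} [Fintype n] {T : Finset ι} {l : ι → ℝ} {u : ι → n → ℝ}

theorem sum_mul_dotProduct_sq_eq_zero (hrel : ∑ i ∈ T, l i • vecMulVec (u i) (u i) = 0)
    (c : n → ℝ) : ∑ i ∈ T, l i * (c ⬝ᵥ u i) ^ 2 = 0 := by
  simpa only [trace_vecMulVec_mul_vecMulVec_self] using
    sum_mul_trace_mul_eq_zero hrel (vecMulVec c c)

theorem le_sum_negPart_div_four {Q : Matrix n n ℝ} {m : ℝ} (hm : 0 < m)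
    (hself : ∀ i ∈ T, u i ⬝ᵥ Q *ᵥ u i = m)
    (hcross : ∀ i ∈ T, ∀ j ∈ T, i ≠ j → 2 * |u i ⬝ᵥ Q *ᵥ u j| ≤ m)
    (hrel : ∑ i ∈ T, l i • vecMulVec (u i) (u i) = 0) {j : ι} (hj : j ∈ T) :
    l j ≤ (∑ i ∈ T, (l i)⁻) / 4 := by
  classical
  have hsum := sum_mul_dotProduct_sq_eq_zero hrel (Q *ᵥ u j)
  simp only [dotProduct_comm (Q *ᵥ u j)] at hsum
  rw [← add_sum_erase T _ hj, hself j hj] at hsum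
  have hterm : ∀ i ∈ T.erase j, -(l i * (u i ⬝ᵥ Q *ᵥ u j) ^ 2) ≤ (l i)⁻ * (m ^ 2 / 4) := by
    intro i hi
    obtain ⟨hij, hi⟩ := mem_erase.mp hi
    have hb := hcross i hi j hj hij
    have hsq : (u i ⬝ᵥ Q *ᵥ u j) ^ 2 ≤ m ^ 2 / 4 := by
      nlinarith [sq_abs (u i ⬝ᵥ Q *ᵥ u j), abs_nonneg (u i ⬝ᵥ Q *ᵥ u j)]
    nlinarith [neg_le_negPart (l i), negPart_nonneg (l i), sq_nonneg (u i ⬝ᵥ Q *ᵥ u j)]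
  have herase : ∑ i ∈ T.erase j, (l i)⁻ * (m ^ 2 / 4) ≤ ∑ i ∈ T, (l i)⁻ * (m ^ 2 / 4) :=
    sum_le_sum_of_subset_of_nonneg (erase_subset j T) fun i _ _ => by positivity
  have hle : l j * m ^ 2 ≤ (∑ i ∈ T, (l i)⁻) / 4 * m ^ 2 := by
    have := sum_le_sum hterm
    rw [sum_neg_distrib] at this
    rw [div_mul_eq_mul_div, mul_div_assoc, sum_mul]
    linarith
  exact le_of_mul_le_mul_right hle (by positivity)

theorem four_le_card_filter_pos (hsum : ∑ i ∈ T, l i = 0) (hl : ∃ i ∈ T, l i ≠ 0)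
    (hle : ∀ j ∈ T, l j ≤ (∑ i ∈ T, (l i)⁻) / 4) : 4 ≤ #{i ∈ T | 0 < l i} := by
  have hpos : ∑ i ∈ T with 0 < l i, l i = ∑ i ∈ T, (l i)⁻ := by
    have : ∑ i ∈ T, ((l i)⁺ - (l i)⁻) = 0 := by simpa only [posPart_sub_negPart] using hsum
    rw [sum_sub_distrib, sub_eq_zero] at this
    rw [← this, sum_filter]
    exact sum_congr rfl fun i _ => (posPart_eq_ite_lt (a := l i)).symm
  have hs : 0 < ∑ i ∈ T, (l i)⁻ := by
    obtain ⟨i, hi, hli⟩ := hl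
    rcases hli.lt_or_gt with hneg | hposi
    · exact (negPart_pos hneg).trans_le
        (single_le_sum (fun k _ => negPart_nonneg (l k)) hi)
    · linarith [hle i hi]
  have hcard : ∑ i ∈ T, (l i)⁻ ≤ #{i ∈ T | 0 < l i} * ((∑ i ∈ T, (l i)⁻) / 4) := by
    rw [← hpos, ← nsmul_eq_mul]
    exact sum_le_card_nsmul _ _ _ fun i hi => hpos ▸ hle i (mem_filter.mp hi).1
  by_contra! h
  have : (#{i ∈ T | 0 < l i} : ℝ) ≤ 3 := by exact_mod_cast Nat.le_of_lt_succ h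
  nlinarith

theorem mem_span_filter_nonpos_of_sum_smul_vecMulVec_eq_zero [DecidableEq n]
    (hrel : ∑ i ∈ T, l i • vecMulVec (u i) (u i) = 0) {j : ι} (hj : j ∈ T) (hlj : 0 < l j) :
    u j ∈ span ℝ (u '' ↑{i ∈ T | l i ≤ 0}) := by
  by_contra hnot
  obtain ⟨f, hfj, hfW⟩ := exists_dual_map_eq_bot_of_notMem hnot inferInstance
  set c := (dotProductEquiv ℝ n).symm f
  have hc : ∀ v, c ⬝ᵥ v = f v := dotProductEquiv_symm_dotProduct f
  have hterm : ∀ i ∈ T, 0 ≤ l i * (c ⬝ᵥ u i) ^ 2 := by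
    intro i hi
    rcases le_or_gt (l i) 0 with hnp | hp
    · have hfi : f (u i) ∈ (span ℝ (u '' ↑{i ∈ T | l i ≤ 0})).map f :=
        Submodule.mem_map_of_mem (subset_span ⟨i, mem_filter.mpr ⟨hi, hnp⟩, rfl⟩)
      rw [hfW, mem_bot] at hfi
      simp [hc, hfi]
    · positivity
  have := (sum_eq_zero_iff_of_nonneg hterm).mp (sum_mul_dotProduct_sq_eq_zero hrel c) j hj
  simp [hc, hlj.ne', hfj] at this

theorem four_le_card_filter_pos_of_sum_smul_vecMulVec_eq_zero {Q : Matrix n n ℝ} {m : ℝ}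
    (hm : 0 < m) (hself : ∀ i ∈ T, u i ⬝ᵥ Q *ᵥ u i = m)
    (hcross : ∀ i ∈ T, ∀ j ∈ T, i ≠ j → 2 * |u i ⬝ᵥ Q *ᵥ u j| ≤ m)
    (hrel : ∑ i ∈ T, l i • vecMulVec (u i) (u i) = 0) (hl : ∃ i ∈ T, l i ≠ 0) :
    4 ≤ #{i ∈ T | 0 < l i} := by
  have hsum : (∑ i ∈ T, l i) * m = 0 := by
    rw [sum_mul, ← sum_mul_trace_mul_eq_zero hrel Q]
    exact sum_congr rfl fun i hi => by rw [trace_mul_vecMulVec_self, hself i hi]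
  exact four_le_card_filter_pos ((mul_eq_zero.mp hsum).resolve_right hm.ne') hl
    fun j hj => le_sum_negPart_div_four hm hself hcross hrel hj

theorem card_filter_pos_add_le_finrank_span_vecMulVec [DecidableEq ι] [DecidableEq n]
    {X : Set (n → ℝ)} (hX : span ℝ X = ⊤) (huX : ∀ i ∈ T, u i ∈ X)
    (hrel : ∑ i ∈ T, l i • vecMulVec (u i) (u i) = 0) {j : ι} (hj : j ∈ T)
    (hind : LinearIndepOn ℝ (fun i => vecMulVec (u i) (u i)) ↑(T.erase j)) :
    #{i ∈ T | 0 < l i} + Fintype.card n ≤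
      finrank ℝ (span ℝ ((fun v => vecMulVec v v) '' X)) + 1 := by
  set W := span ℝ (u '' ↑{i ∈ T | l i ≤ 0})
  have huW : ∀ i ∈ T, u i ∈ W := fun i hi => by
    rcases le_or_gt (l i) 0 with hnp | hp
    · exact subset_span ⟨i, mem_filter.mpr ⟨hi, hnp⟩, rfl⟩
    · exact mem_span_filter_nonpos_of_sum_smul_vecMulVec_eq_zero hrel hi hp
  have hcount := card_add_finrank_quotient_le_finrank_span_vecMulVec hX W
    (fun i : ↑(T.erase j) => u i) (fun i => huX i (mem_of_mem_erase i.2))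
    (fun i => huW i (mem_of_mem_erase i.2)) hind
  have hW : finrank ℝ W ≤ #{i ∈ T | l i ≤ 0} := by
    have h := finrank_span_finset_le_card (R := ℝ) ({i ∈ T | l i ≤ 0}.image u)
    rw [coe_image] at h
    exact h.trans card_image_le
  have hquot := finrank_quotient_add_finrank W
  have hsplit := card_filter_add_card_filter_not (s := T) (fun i => 0 < l i)
  simp only [not_lt] at hsplit
  rw [Module.finrank_fintype_fun_eq_card] at hquot
  rw [Fintype.card_coe, card_erase_of_mem hj] at hcount
  omega

end RankOneRelations

section MinimalVectors

variable {d : ℕ} {Q : Matrix (Fin d) (Fin d) ℝ} {x y : Fin d → ℤ}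

theorem castVec_add (x y : Fin d → ℤ) : castVec (x + y) = castVec x + castVec y := by
  funext i; simp [castVec]

theorem castVec_sub (x y : Fin d → ℤ) : castVec (x - y) = castVec x - castVec y := by
  funext i; simp [castVec]

theorem castVec_neg (x : Fin d → ℤ) : castVec (-x) = -castVec x := by
  funext i; simp [castVec]

theorem castVec_ne_zero (hx : x ≠ 0) : castVec x ≠ 0 := fun h =>
  hx <| funext fun i => by simpa [castVec] using congrFun h i

theorem quadVal_add (hQ : Q.IsSymm) (x y : Fin d → ℤ) :
    quadVal Q (x + y) = quadVal Q x + 2 * (castVec x ⬝ᵥ Q *ᵥ castVec y) + quadVal Q y := by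
  rw [quadVal, quadVal, quadVal, castVec_add, mulVec_add, dotProduct_add, add_dotProduct,
    add_dotProduct, hQ.dotProduct_mulVec_comm (castVec y)]
  ring

theorem quadVal_sub (hQ : Q.IsSymm) (x y : Fin d → ℤ) :
    quadVal Q (x - y) = quadVal Q x - 2 * (castVec x ⬝ᵥ Q *ᵥ castVec y) + quadVal Q y := by
  rw [quadVal, quadVal, quadVal, castVec_sub, mulVec_sub, dotProduct_sub, sub_dotProduct,
    sub_dotProduct, hQ.dotProduct_mulVec_comm (castVec y)]
  ring

theorem quadVal_pos (hQ : Q.PosDef) (hx : x ≠ 0) : 0 < quadVal Q x := by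
  simpa [quadVal] using hQ.dotProduct_mulVec_pos (castVec_ne_zero hx)

theorem quadVal_eq_of_mem_minimalVectors (hx : x ∈ MinimalVectors Q)
    (hy : y ∈ MinimalVectors Q) : quadVal Q x = quadVal Q y :=
  le_antisymm (hx.2 y hy.1) (hy.2 x hx.1)

theorem two_mul_abs_le_quadVal_of_mem_minimalVectors (hQ : Q.IsSymm)
    (hx : x ∈ MinimalVectors Q) (hy : y ∈ MinimalVectors Q)
    (hxy : rankOneForm (castVec x) ≠ rankOneForm (castVec y)) :
    2 * |castVec x ⬝ᵥ Q *ᵥ castVec y| ≤ quadVal Q x := by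
  have hsum : x + y ≠ 0 := fun h => hxy <| by
    rw [eq_neg_of_add_eq_zero_left h, castVec_neg, rankOneForm, rankOneForm, neg_vecMulVec,
      vecMulVec_neg, neg_neg]
  have hdiff : x - y ≠ 0 := fun h => hxy <| by rw [sub_eq_zero.mp h]
  have hplus := hx.2 _ hsum
  have hminus := hx.2 _ hdiff
  rw [quadVal_add hQ, quadVal_eq_of_mem_minimalVectors hy hx] at hplus
  rw [quadVal_sub hQ, quadVal_eq_of_mem_minimalVectors hy hx] at hminus
  have : |castVec x ⬝ᵥ Q *ᵥ castVec y| ≤ quadVal Q x / 2 :=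
    abs_le.mpr ⟨by linarith, by linarith⟩
  linarith

end MinimalVectors

theorem perfect_cone_low_dim_simplicial_general
    (g : ℕ) (Q : Matrix (Fin g) (Fin g) ℝ) (hQ : Q.PosDef)
    (hspan : Submodule.span ℝ (castVec '' MinimalVectors Q) = ⊤)
    (hdim : Module.finrank ℝ
      (Submodule.span ℝ ((fun x => rankOneForm (castVec x)) '' MinimalVectors Q)) ≤ g + 2) :
    LinearIndependent ℝ
      (fun A : ((fun x => rankOneForm (castVec x)) '' MinimalVectors Q) =>
        (A : Matrix (Fin g) (Fin g) ℝ)) := by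
  classical
  by_contra hdep
  obtain ⟨l, hl0, hrel, hind⟩ := exists_circuit_of_not_linearIndependent hdep
  choose x hxS hx using fun A : ((fun x => rankOneForm (castVec x)) '' MinimalVectors Q) => A.2
  have hu : (fun A => vecMulVec (castVec (x A)) (castVec (x A))) = Subtype.val := funext hx
  have hrel' : ∑ A ∈ l.support, l A • vecMulVec (castVec (x A)) (castVec (x A)) = 0 := by
    simpa [Finsupp.linearCombination_apply, Finsupp.sum, ← hu] using hrel
  obtain ⟨A₀, hA₀⟩ := Finsupp.support_nonempty_iff.mpr hl0
  have hself : ∀ A, quadVal Q (x A) = quadVal Q (x A₀) := fun A =>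
    quadVal_eq_of_mem_minimalVectors (hxS A) (hxS A₀)
  have hcross : ∀ A B, A ≠ B →
      2 * |castVec (x A) ⬝ᵥ Q *ᵥ castVec (x B)| ≤ quadVal Q (x A₀) := fun A B hAB =>
    hself A ▸ two_mul_abs_le_quadVal_of_mem_minimalVectors
      (isHermitian_iff_isSymm.mp hQ.isHermitian) (hxS A) (hxS B)
      fun h => hAB (Subtype.ext ((hx A).symm.trans (h.trans (hx B))))
  have hpos := four_le_card_filter_pos_of_sum_smul_vecMulVec_eq_zero
    (quadVal_pos hQ (hxS A₀).1) (fun A _ => hself A) (fun A _ B _ => hcross A B) hrel'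
    ⟨A₀, hA₀, Finsupp.mem_support_iff.mp hA₀⟩
  have hle := card_filter_pos_add_le_finrank_span_vecMulVec hspan
    (fun A _ => Set.mem_image_of_mem castVec (hxS A)) hrel' hA₀ (hu ▸ hind A₀ hA₀)
  rw [Set.image_image, Fintype.card_fin] at hle
  have := hle.trans (Nat.add_le_add_right hdim 1)
  omega

/-- Perfect cones of dimension at most `g + 2` are simplicial: if the minimal vectors
of `Q` span `ℝᵍ` and the real span of the rank-one forms `p(x)`, `x` a minimal vector,
has dimension at most `g + 2`, then the set `{p(x) : x ∈ S}` is linearly independent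
over `ℝ`. -/
theorem perfect_cone_low_dim_simplicial
    (g : ℕ) (hg : 1 ≤ g) (Q : Matrix (Fin g) (Fin g) ℝ) (hQ : Q.PosDef)
    (hspan : Submodule.span ℝ (castVec '' MinimalVectors Q) = ⊤)
    (hdim : Module.finrank ℝ
      (Submodule.span ℝ ((fun x => rankOneForm (castVec x)) '' MinimalVectors Q)) ≤ g + 2) :
    LinearIndependent ℝ
      (fun A : ((fun x => rankOneForm (castVec x)) '' MinimalVectors Q) =>
        (A : Matrix (Fin g) (Fin g) ℝ)) :=
  perfect_cone_low_dim_simplicial_general g Q hQ hspan hdim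
end

section
/- Let g ≥ 3 and 3 ≤ r ≤ g, and set v = e₁ + … + e_r ∈ ℝ^g (sum of the first r standard basis vectors). Suppose w ∈ ℝ^g, γ ∈ ℝ and β ∈ ℝ^g satisfy the matrix identity w wᵀ = γ·v vᵀ + diag(β₁, …, β_g). Then w is a scalar multiple of v or a scalar multiple of one of the standard basis vectors e₁, …, e_g. -/
/-!
Off the diagonal the identity reads `wᵢ wⱼ = γ vᵢ vⱼ`. If `γ = 0`, at most one coordinate of `w`
is nonzero. If `γ ≠ 0`, fix `a` in the support of `v`; for any `k`, a third index `b ∉ {k, a}` in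
the support of `v` has `w_b ≠ 0`, and cancelling `w_b` from `w_k w_b = γ v_k v_b` and
`w_a w_b = γ v_a v_b` gives `w_k v_a = w_a v_k`, i.e. `w` is proportional to `v`.
-/

open Matrix

theorem mul_apply_eq_of_vecMulVec_eq_smul_add_diagonal {ι R : Type*} [DecidableEq ι]
    [CommSemiring R] {w v β : ι → R} {γ : R}
    (h : vecMulVec w w = γ • vecMulVec v v + diagonal β) {i j : ι} (hij : i ≠ j) :
    w i * w j = γ * (v i * v j) := by
  simpa [vecMulVec_apply, diagonal_apply_ne _ hij] using congrFun (congrFun h i) j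

theorem exists_eq_smul_single_of_mul_eq_zero {ι R : Type*} [DecidableEq ι] [Nonempty ι]
    [Semiring R] [NoZeroDivisors R] {w : ι → R} (hw : ∀ i j, i ≠ j → w i * w j = 0) :
    ∃ (i : ι) (t : R), w = t • Pi.single i 1 := by
  by_cases hzero : w = 0
  · exact ⟨Classical.arbitrary ι, 0, by simp [hzero]⟩
  obtain ⟨i, hi⟩ := Function.ne_iff.mp hzero
  refine ⟨i, w i, funext fun j => ?_⟩
  rcases eq_or_ne j i with rfl | hji
  · simp
  · have hj : w j = 0 := (mul_eq_zero.mp (hw i j hji.symm)).resolve_left hi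
    simp [hj, hji]

theorem eq_smul_of_mul_eq_smul_mul {ι K : Type*} [Field K] {w v : ι → K} {γ : K}
    (hγ : γ ≠ 0) (hw : ∀ i j, i ≠ j → w i * w j = γ * (v i * v j)) {a : ι} (ha : v a ≠ 0)
    (hthird : ∀ k, ∃ b, b ≠ k ∧ b ≠ a ∧ v b ≠ 0) :
    w = (w a / v a) • v := by
  funext k
  obtain ⟨b, hbk, hba, hb⟩ := hthird k
  have hwb : w b ≠ 0 := by
    intro hwb
    have hab := hw a b hba.symm
    rw [hwb, mul_zero] at hab
    exact mul_ne_zero hγ (mul_ne_zero ha hb) hab.symm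
  have hcross : w k * v a * w b = w a * v k * w b := by
    rcases eq_or_ne k a with rfl | hka
    · ring
    · calc w k * v a * w b = (w k * w b) * v a := by ring
        _ = (w a * w b) * v k := by rw [hw k b hbk.symm, hw a b hba.symm]; ring
        _ = w a * v k * w b := by ring
  rw [Pi.smul_apply, smul_eq_mul, div_mul_eq_mul_div, eq_div_iff ha]
  exact mul_right_cancel₀ hwb hcross

theorem rankOne_relation_multiple_of_v_or_basis_general
    (g r : ℕ) (hr : 3 ≤ r) (hrg : r ≤ g)
    (v : Fin g → ℝ) (hv : v = fun k : Fin g => if (k : ℕ) < r then (1 : ℝ) else 0)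
    (w : Fin g → ℝ) (γ : ℝ) (β : Fin g → ℝ)
    (h : vecMulVec w w = γ • vecMulVec v v + Matrix.diagonal β) :
    (∃ t : ℝ, w = t • v) ∨
      (∃ (i : Fin g) (t : ℝ), w = t • (Pi.single i 1 : Fin g → ℝ)) := by
  have hoff := fun i j (hij : i ≠ j) => mul_apply_eq_of_vecMulVec_eq_smul_add_diagonal h hij
  by_cases hγ : γ = 0
  · have : Nonempty (Fin g) := ⟨⟨0, by omega⟩⟩
    exact .inr <| exists_eq_smul_single_of_mul_eq_zero fun i j hij => by
      simpa [hγ] using hoff i j hij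
  · have hv_ne : ∀ k : Fin g, (k : ℕ) < r → v k ≠ 0 := fun k hk => by simp [hv, hk]
    refine .inl ⟨_, eq_smul_of_mul_eq_smul_mul hγ hoff (a := ⟨0, by omega⟩)
      (hv_ne _ (by simp only; omega)) fun k => ?_⟩
    by_cases hk : (k : ℕ) = 1
    · exact ⟨⟨2, by omega⟩, by simp [Fin.ext_iff, hk], by simp [Fin.ext_iff],
        hv_ne _ (by simp only; omega)⟩
    · exact ⟨⟨1, by omega⟩, by simp [Fin.ext_iff]; omega, by simp [Fin.ext_iff],
        hv_ne _ (by simp only; omega)⟩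

/-- Let `g ≥ 3`, `3 ≤ r ≤ g` and `v = e₁ + … + e_r ∈ ℝᵍ` (here encoded with `0`-based
indices: `v k = 1` iff `k < r`). If `w wᵀ = γ · v vᵀ + diag(β)`, then `w` is a scalar
multiple of `v` or a scalar multiple of one of the standard basis vectors `eᵢ`. -/
theorem rankOne_relation_multiple_of_v_or_basis
    (g r : ℕ) (hg : 3 ≤ g) (hr : 3 ≤ r) (hrg : r ≤ g)
    (v : Fin g → ℝ) (hv : v = fun k : Fin g => if (k : ℕ) < r then (1 : ℝ) else 0)
    (w : Fin g → ℝ) (γ : ℝ) (β : Fin g → ℝ)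
    (h : vecMulVec w w = γ • vecMulVec v v + Matrix.diagonal β) :
    (∃ t : ℝ, w = t • v) ∨
      (∃ (i : Fin g) (t : ℝ), w = t • (Pi.single i 1 : Fin g → ℝ)) :=
  rankOne_relation_multiple_of_v_or_basis_general g r hr hrg v hv w γ β h
end

section
/- Let n ≥ 3 and let a, b, c be real numbers with ac ≠ b². If λ₁, …, λₙ are real numbers satisfying a + b(λᵢ + λⱼ) + c·λᵢλⱼ = 0 for all pairs of distinct indices i ≠ j, then all the λᵢ are equal. -/
/-!
Write `f(x, y) = a + b(x + y) + cxy`. For fixed `z`, `x ↦ f(x, z)` is affine with slope `b + cz`,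
and `ac - b² = c f(x, z) - (b + cx)(b + cz)`, so a root of `f(·, z)` at which the slope vanishes
forces `ac = b²`. Hence `f(·, z)` has at most one root, and with `n ≥ 3` any two indices `i, j`
have a third index `k` with `λᵢ, λⱼ` both roots of `f(·, λₖ)`.
-/

section BilinearRelation

variable {R : Type*} [CommRing R]

theorem mul_sub_sq_eq_mul_bilinear_sub_mul (a b c x y : R) :
    a * c - b ^ 2 = c * (a + b * (x + y) + c * (x * y)) - (b + c * x) * (b + c * y) := by
  ring

theorem eq_of_bilinear_eq_zero_of_bilinear_eq_zero [IsDomain R] {a b c x y z : R}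
    (habc : a * c ≠ b ^ 2) (hx : a + b * (x + z) + c * (x * z) = 0)
    (hy : a + b * (y + z) + c * (y * z) = 0) : x = y := by
  have hslope : (x - y) * (b + c * z) = 0 := by linear_combination hx - hy
  have hz : b + c * z ≠ 0 := fun hz ↦
    habc <| sub_eq_zero.mp <| by
      rw [mul_sub_sq_eq_mul_bilinear_sub_mul a b c x z, hx, hz]
      ring
  exact sub_eq_zero.mp <| (mul_eq_zero.mp hslope).resolve_right hz

end BilinearRelation

/-- If `n ≥ 3`, `a, b, c` are reals with `ac ≠ b²`, and `λ₁, …, λₙ` are reals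
satisfying `a + b(λᵢ + λⱼ) + c λᵢλⱼ = 0` for all `i ≠ j`, then all the `λᵢ` are
equal. -/
theorem all_eq_of_pairwise_bilinear_relation
    (n : ℕ) (hn : 3 ≤ n) (a b c : ℝ) (habc : a * c ≠ b ^ 2)
    (lam : Fin n → ℝ)
    (h : ∀ i j : Fin n, i ≠ j → a + b * (lam i + lam j) + c * (lam i * lam j) = 0) :
    ∀ i j : Fin n, lam i = lam j := by
  intro i j
  obtain ⟨k, hki, hkj⟩ := ENat.exists_ne_ne_of_three_le (α := Fin n) (by simpa using hn) i j
  exact eq_of_bilinear_eq_zero_of_bilinear_eq_zero habc (h i k hki.symm) (h j k hkj.symm)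
end

section
/- For every g ≥ 1, the g(g+1)/2 matrices {p(eᵢ) : 1 ≤ i ≤ g} ∪ {p(eᵢ − eⱼ) : 1 ≤ i < j ≤ g}, where e₁, …, e_g is the standard basis of ℤ^g, form a ℤ-basis of the lattice of symmetric g×g integer matrices. (In particular, the top-dimensional perfect cone associated to the root lattice A_g is basic, hence simplicial.) -/
open Matrix

/-- The lattice `Sym²(ℤᵍ)` of symmetric `g × g` integer matrices. -/
def symLattice (g : ℕ) : Submodule ℤ (Matrix (Fin g) (Fin g) ℤ) where
  carrier := {A | A.IsSymm}
  zero_mem' := Matrix.isSymm_zero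
  add_mem' := fun ha hb => ha.add hb
  smul_mem' := fun c _ ha => ha.smul c

/-!
Off the diagonal, `p(eᵢ - eⱼ)` is the only generator with a nonzero `(i, j)` entry, namely `-1`;
and every `p(eᵢ - eⱼ)` has zero row sums, so the `i`-th row sum of a combination of generators
is the coefficient of `p(eᵢ)`. Hence reading off the negated off-diagonal entries and the row sums
inverts the expansion map, and a symmetric matrix with all these coordinates zero vanishes.
-/

open Submodule Set

abbrev UpperPair (n : Type*) [LinearOrder n] := {q : n × n // q.1 ≤ q.2}

theorem card_upperPair {n : Type*} [Fintype n] [LinearOrder n] :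
    Fintype.card (UpperPair n) = Fintype.card n * (Fintype.card n + 1) / 2 := by
  rw [← Fintype.card_congr Sym2.sortEquiv, Sym2.card, Nat.choose_two_right, Nat.mul_comm]
  rfl

namespace Matrix

variable (R n : Type*) [CommRing R]

def symmetricSubmodule : Submodule R (Matrix n n R) where
  carrier := {A | A.IsSymm}
  zero_mem' := isSymm_zero
  add_mem' := fun ha hb => ha.add hb
  smul_mem' := fun c _ ha => ha.smul c

variable {R n}

theorem isSymm_vecMulVec_self (v : n → R) : (vecMulVec v v).IsSymm :=
  transpose_vecMulVec v v

end Matrix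

theorem symLattice_eq_symmetricSubmodule (g : ℕ) :
    symLattice g = Matrix.symmetricSubmodule ℤ (Fin g) :=
  rfl

namespace UpperPair

variable {R n : Type*} [CommRing R] [LinearOrder n]

/-- The rank-one forms of these vectors span the perfect cone of `A_g`, `g = card n`. -/
def minimalVector (q : UpperPair n) : n → R :=
  if q.1.1 = q.1.2 then Pi.single q.1.1 1 else Pi.single q.1.1 1 - Pi.single q.1.2 1

theorem minimalVector_mul_minimalVector_of_lt {a b : n} (hab : a < b) (q : UpperPair n) :
    minimalVector (R := R) q a * minimalVector q b =
      if q = ⟨(a, b), hab.le⟩ then -1 else 0 := by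
  obtain ⟨⟨i, j⟩, hij : i ≤ j⟩ := q
  simp only [minimalVector, Subtype.mk.injEq, Prod.mk.injEq]
  rcases hij.lt_or_eq with hij | rfl
  · rw [if_neg hij.ne]
    rcases eq_or_ne b j with rfl | hbj
    · rcases eq_or_ne a i with rfl | hai
      · simp [hij.ne', hab.ne]
      · simp [hai, hab.ne, hai.symm]
    rcases eq_or_ne b i with rfl | hbi
    · simp [hab.ne, (hab.trans hij).ne, hbj.symm]
    · simp [hbi, hbj, hbj.symm]
  · have hne : ¬(i = a ∧ i = b) := fun h => hab.ne (h.1.symm.trans h.2)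
    rcases eq_or_ne a i with rfl | hai
    · simp [hab.ne, hab.ne']
    · simp [hai, hne]

variable [Fintype n]

theorem sum_minimalVector (q : UpperPair n) :
    ∑ l, minimalVector (R := R) q l = if q.1.1 = q.1.2 then 1 else 0 := by
  unfold minimalVector
  split_ifs <;> simp [Finset.sum_sub_distrib]

theorem minimalVector_apply_mul_sum (q : UpperPair n) (a : n) :
    minimalVector (R := R) q a * ∑ l, minimalVector q l =
      if q = ⟨(a, a), le_rfl⟩ then 1 else 0 := by
  rw [sum_minimalVector]
  obtain ⟨⟨i, j⟩, hle⟩ := q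
  rcases eq_or_ne i j with rfl | hij
  · simp [minimalVector, Pi.single_apply, eq_comm]
  · have : (⟨(i, j), hle⟩ : UpperPair n) ≠ ⟨(a, a), le_rfl⟩ := by
      simp only [ne_eq, Subtype.mk.injEq, Prod.mk.injEq]
      rintro ⟨rfl, rfl⟩
      exact hij rfl
    simp [hij, this]

def symCoords : Matrix n n R →ₗ[R] (UpperPair n → R) where
  toFun A q := if q.1.1 = q.1.2 then ∑ l, A q.1.1 l else -A q.1.1 q.1.2
  map_add' A B := by
    ext q
    by_cases h : q.1.1 = q.1.2 <;> simp [h, Finset.sum_add_distrib, add_comm]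
  map_smul' r A := by
    ext q
    by_cases h : q.1.1 = q.1.2 <;> simp [h, Finset.mul_sum]

theorem symCoords_sum_smul_vecMulVec (c : UpperPair n → R) :
    symCoords (∑ q, c q • vecMulVec (minimalVector q) (minimalVector q)) = c := by
  have entry : ∀ a b, (∑ q, c q • vecMulVec (minimalVector q) (minimalVector q)) a b =
      ∑ q, c q * (minimalVector q a * minimalVector q b) := fun a b => by
    simp [Matrix.sum_apply, vecMulVec_apply]
  ext ⟨⟨a, b⟩, hab⟩
  rcases (show a ≤ b from hab).lt_or_eq with hlt | rfl
  · simp only [symCoords, LinearMap.coe_mk, AddHom.coe_mk, if_neg hlt.ne, entry,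
      minimalVector_mul_minimalVector_of_lt hlt, mul_ite, mul_neg_one, mul_zero,
      Finset.sum_ite_eq', Finset.mem_univ, if_true, neg_neg]
  · simp only [symCoords, LinearMap.coe_mk, AddHom.coe_mk, if_true, entry]
    rw [Finset.sum_comm]
    simp only [← Finset.mul_sum, minimalVector_apply_mul_sum, mul_ite, mul_one,
      mul_zero, Finset.sum_ite_eq', Finset.mem_univ, if_true]

theorem eq_zero_of_symCoords_eq_zero {A : Matrix n n R} (hA : A.IsSymm) (h : symCoords A = 0) :
    A = 0 := by
  have upper : ∀ {a b}, a < b → A a b = 0 := fun {a b} hab => by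
    simpa [symCoords, hab.ne] using congrFun h ⟨(a, b), hab.le⟩
  have off_diag : ∀ {a b}, a ≠ b → A a b = 0 := fun {a b} hab => by
    rcases hab.lt_or_gt with hlt | hgt
    · exact upper hlt
    · rw [← hA.apply]; exact upper hgt
  ext a b
  rcases eq_or_ne a b with rfl | hab
  · have row := congrFun h ⟨(a, a), le_rfl⟩
    simp only [symCoords, LinearMap.coe_mk, AddHom.coe_mk, if_true, Pi.zero_apply] at row
    rwa [Finset.sum_eq_single a (fun l _ hl => off_diag hl.symm) (by simp)] at row
  · exact off_diag hab

theorem sum_symCoords_smul_vecMulVec {A : Matrix n n R} (hA : A.IsSymm) :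
    ∑ q, symCoords A q • vecMulVec (minimalVector q) (minimalVector q) = A := by
  have hsymm : (∑ q, symCoords A q • vecMulVec (minimalVector q) (minimalVector q)).IsSymm :=
    (symmetricSubmodule R n).sum_mem fun q _ =>
      (symmetricSubmodule R n).smul_mem _ (isSymm_vecMulVec_self _)
  refine sub_eq_zero.1 (eq_zero_of_symCoords_eq_zero (hsymm.sub hA) ?_)
  rw [map_sub, symCoords_sum_smul_vecMulVec, sub_self]

theorem linearIndependent_vecMulVec_minimalVector :
    LinearIndependent R fun q : UpperPair n =>
      vecMulVec (minimalVector (R := R) q) (minimalVector q) :=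
  Fintype.linearIndependent_iff.2 fun c hc => congrFun <|
    (symCoords_sum_smul_vecMulVec c).symm.trans ((congrArg symCoords hc).trans (map_zero _))

theorem span_vecMulVec_minimalVector :
    span R (range fun q : UpperPair n => vecMulVec (minimalVector q) (minimalVector q)) =
      symmetricSubmodule R n := by
  refine le_antisymm (span_le.2 ?_) fun A hA => ?_
  · rintro _ ⟨q, rfl⟩
    exact isSymm_vecMulVec_self _
  · rw [← sum_symCoords_smul_vecMulVec hA]
    exact sum_mem fun q _ => smul_mem _ _ (subset_span (mem_range_self q))

end UpperPair

open UpperPair in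
theorem Ag_perfect_cone_basic_general (g : ℕ) :
    Fintype.card {q : Fin g × Fin g // q.1 ≤ q.2} = g * (g + 1) / 2 ∧
    ∃ b : Module.Basis {q : Fin g × Fin g // q.1 ≤ q.2} ℤ (symLattice g),
      ∀ q : {q : Fin g × Fin g // q.1 ≤ q.2},
        (b q : Matrix (Fin g) (Fin g) ℤ) =
          if q.1.1 = q.1.2 then rankOneForm (Pi.single q.1.1 1)
          else rankOneForm (Pi.single q.1.1 1 - Pi.single q.1.2 1) := by
  refine ⟨by simpa using card_upperPair (n := Fin g), ?_⟩
  have hspan := span_vecMulVec_minimalVector.trans (symLattice_eq_symmetricSubmodule g).symm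
  refine ⟨(Module.Basis.span linearIndependent_vecMulVec_minimalVector).map
    (LinearEquiv.ofEq _ _ hspan), fun q => ?_⟩
  rw [Module.Basis.map_apply, Module.Basis.span_apply, LinearEquiv.coe_ofEq_apply]
  unfold minimalVector
  split_ifs <;> rfl

/-- For every `g ≥ 1`, the `g(g+1)/2` matrices `p(eᵢ)` (for `1 ≤ i ≤ g`) and
`p(eᵢ − eⱼ)` (for `1 ≤ i < j ≤ g`) form a `ℤ`-basis of the lattice of symmetric
`g × g` integer matrices; in particular the perfect cone of the root lattice `A_g`
is basic. The family is indexed by pairs `(i, j)` with `i ≤ j`, the diagonal pairs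
`(i, i)` corresponding to `p(eᵢ)` and the off-diagonal ones to `p(eᵢ − eⱼ)`. -/
theorem Ag_perfect_cone_basic (g : ℕ) (hg : 1 ≤ g) :
    Fintype.card {q : Fin g × Fin g // q.1 ≤ q.2} = g * (g + 1) / 2 ∧
    ∃ b : Module.Basis {q : Fin g × Fin g // q.1 ≤ q.2} ℤ (symLattice g),
      ∀ q : {q : Fin g × Fin g // q.1 ≤ q.2},
        (b q : Matrix (Fin g) (Fin g) ℤ) =
          if q.1.1 = q.1.2 then rankOneForm (Pi.single q.1.1 1)
          else rankOneForm (Pi.single q.1.1 1 - Pi.single q.1.2 1) :=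
  Ag_perfect_cone_basic_general g
end

section
/- Let v₁ = (1,1) and v₂ = (1,−1) in ℤ². Then p(v₁) + p(v₂) = 2·I₂ (equivalently, ½(q_{v₁}(x) + q_{v₂}(x)) = x₁² + x₂²), the matrices p(v₁) and p(v₂) are ℤ-linearly independent, but there exists no symmetric 2×2 integer matrix A such that (p(v₁), p(v₂), A) is a ℤ-basis of the lattice of symmetric 2×2 integer matrices; that is, p(v₁), p(v₂) cannot be completed to a ℤ-basis of Sym²(ℤ²) (the cone they span is simplicial but not basic). -/
open Matrix

/-!
If `p(v₁)` and `p(v₂)` were two distinct vectors `b i`, `b j` of a basis, the coordinate of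
`p(v₁) + p(v₂)` at `i` would be `1`. But `p(v₁) + p(v₂) = 2 • I₂` with `I₂` in the lattice,
so that coordinate is even.
-/

theorem Module.Basis.isUnit_of_add_eq_smul {ι R M : Type*} [CommSemiring R] [AddCommMonoid M]
    [Module R M] (b : Module.Basis ι R M) {i j : ι} (hij : i ≠ j) {c : R} {m : M}
    (h : b i + b j = c • m) : IsUnit c := by
  have hi := congrArg (fun x => b.repr x i) h
  simp only [map_add, map_smul, Module.Basis.repr_self, Finsupp.add_apply,
    Finsupp.smul_apply, smul_eq_mul, Finsupp.single_eq_same,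
    Finsupp.single_eq_of_ne hij, add_zero] at hi
  exact IsUnit.of_mul_eq_one _ hi.symm

theorem rankOneForm_isSymm {d : ℕ} {R : Type*} [CommRing R] (v : Fin d → R) :
    (rankOneForm v).IsSymm :=
  transpose_vecMulVec v v

theorem rankOneForm_mem_symLattice {g : ℕ} (v : Fin g → ℤ) : rankOneForm v ∈ symLattice g :=
  rankOneForm_isSymm v

theorem rankOneForm_add_rankOneForm_neg {R : Type*} [CommRing R] (a b : R) :
    rankOneForm ![a, b] + rankOneForm ![a, -b] = (2 : R) • diagonal ![a ^ 2, b ^ 2] := by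
  ext i j
  fin_cases i <;> fin_cases j <;> simp [rankOneForm] <;> ring

theorem linearIndependent_rankOneForm_one_one_one_neg_one :
    LinearIndependent ℤ
      ![rankOneForm (![1, 1] : Fin 2 → ℤ), rankOneForm (![1, -1] : Fin 2 → ℤ)] := by
  rw [LinearIndependent.pair_iff]
  intro s t hst
  have h00 := congrFun (congrFun hst 0) 0
  have h01 := congrFun (congrFun hst 0) 1
  simp [rankOneForm] at h00 h01
  omega

/-- For `v₁ = (1,1)` and `v₂ = (1,−1)` in `ℤ²` we have `p(v₁) + p(v₂) = 2·I₂`, the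
matrices `p(v₁)` and `p(v₂)` are `ℤ`-linearly independent, but they cannot be
completed to a `ℤ`-basis of the lattice `Sym²(ℤ²)` of symmetric `2 × 2` integer
matrices: the cone they span is simplicial but not basic. -/
theorem simplicial_not_basic_example :
    rankOneForm (![1, 1] : Fin 2 → ℤ) + rankOneForm (![1, -1] : Fin 2 → ℤ) =
      (2 : ℤ) • (1 : Matrix (Fin 2) (Fin 2) ℤ) ∧
    LinearIndependent ℤ
      ![rankOneForm (![1, 1] : Fin 2 → ℤ), rankOneForm (![1, -1] : Fin 2 → ℤ)] ∧
    ¬ ∃ (ι : Type) (b : Module.Basis ι ℤ (symLattice 2)),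
        {A : symLattice 2 | (A : Matrix (Fin 2) (Fin 2) ℤ) = rankOneForm ![1, 1] ∨
          (A : Matrix (Fin 2) (Fin 2) ℤ) = rankOneForm ![1, -1]} ⊆ Set.range b := by
  have hsum : rankOneForm (![1, 1] : Fin 2 → ℤ) + rankOneForm (![1, -1] : Fin 2 → ℤ) =
      (2 : ℤ) • (1 : Matrix (Fin 2) (Fin 2) ℤ) := by
    rw [rankOneForm_add_rankOneForm_neg, ← diagonal_one]
    congr 2
    ext i
    fin_cases i <;> rfl
  have hind := linearIndependent_rankOneForm_one_one_one_neg_one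
  refine ⟨hsum, hind, ?_⟩
  rintro ⟨ι, b, hb⟩
  obtain ⟨i, hi⟩ := hb (Or.inl rfl : (⟨_, rankOneForm_mem_symLattice ![1, 1]⟩ : symLattice 2) ∈ _)
  obtain ⟨j, hj⟩ := hb (Or.inr rfl : (⟨_, rankOneForm_mem_symLattice ![1, -1]⟩ : symLattice 2) ∈ _)
  have hij : i ≠ j := by
    rintro rfl
    exact hind.injective.ne (show (0 : Fin 2) ≠ 1 by decide)
      (congrArg Subtype.val (hi.symm.trans hj))
  have h2 : IsUnit (2 : ℤ) :=
    b.isUnit_of_add_eq_smul hij (m := ⟨1, isSymm_one⟩) (Subtype.ext (by simp [hi, hj, hsum]))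
  exact absurd h2 (by decide)
end

section
/- Let M₁, M₂, M₃, M₄ be the symmetric 5×5 integer matrices M₁ = [[4,−2,−2,0,−2],[−2,4,0,−1,1],[−2,0,4,−1,1],[0,−1,−1,3,−1],[−2,1,1,−1,3]], M₂ = [[2,−1,−1,0,−1],[−1,2,0,0,0],[−1,0,2,−1,1],[0,0,−1,2,−1],[−1,0,1,−1,2]], M₃ = [[2,−1,−1,0,−1],[−1,2,0,−1,1],[−1,0,2,0,0],[0,−1,0,2,−1],[−1,1,0,−1,2]], M₄ = [[0,0,0,0,0],[0,0,0,0,0],[0,0,0,0,0],[0,0,0,1,−1],[0,0,0,−1,1]]. Then M₁ + M₄ = M₂ + M₃, the real linear span of {M₁, M₂, M₃, M₄} has dimension exactly 3, and for each i the matrix Mᵢ is not a linear combination with nonnegative real coefficients of the other three. (Hence the cone ∑ᵢ ℝ≥0·Mᵢ is a 3-dimensional non-simplicial polyhedral cone.) -/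
/-!
The relation `M₁ + M₄ = M₂ + M₃` puts `M₁` in the span of `M₂, M₃, M₄`, and these three are
already independent on the entries `(1,3), (2,3), (3,3)` (indices from `0`), so the span has
dimension `3`. For non-simpliciality, each `Mᵢ` is separated from the cone spanned by the other
three by a linear functional, a small combination of matrix entries, that is negative on `Mᵢ` and
nonnegative on the other generators.
-/

open Matrix

/-- The four generators of a `3`-dimensional non-simplicial cone in the second
Voronoi decomposition for `g = 5`. -/
def voronoiCone1 : Fin 4 → Matrix (Fin 5) (Fin 5) ℝ :=
  ![!![4, -2, -2, 0, -2;
      -2, 4, 0, -1, 1;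
      -2, 0, 4, -1, 1;
      0, -1, -1, 3, -1;
      -2, 1, 1, -1, 3],
    !![2, -1, -1, 0, -1;
      -1, 2, 0, 0, 0;
      -1, 0, 2, -1, 1;
      0, 0, -1, 2, -1;
      -1, 0, 1, -1, 2],
    !![2, -1, -1, 0, -1;
      -1, 2, 0, -1, 1;
      -1, 0, 2, 0, 0;
      0, -1, 0, 2, -1;
      -1, 1, 0, -1, 2],
    !![0, 0, 0, 0, 0;
      0, 0, 0, 0, 0;
      0, 0, 0, 0, 0;
      0, 0, 0, 1, -1;
      0, 0, 0, -1, 1]]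

theorem not_exists_nonneg_combination_of_map_neg {𝕜 M ι : Type*} [Ring 𝕜] [PartialOrder 𝕜]
    [IsOrderedRing 𝕜] [AddCommMonoid M] [Module 𝕜 M] (φ : M →ₗ[𝕜] 𝕜) {v : ι → M}
    {s : Finset ι} {x : M} (hx : φ x < 0) (hv : ∀ j ∈ s, 0 ≤ φ (v j)) :
    ¬ ∃ c : ι → 𝕜, (∀ j, 0 ≤ c j) ∧ x = ∑ j ∈ s, c j • v j := by
  rintro ⟨c, hc, rfl⟩
  have hφ : 0 ≤ φ (∑ j ∈ s, c j • v j) := by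
    simpa only [map_sum, map_smul, smul_eq_mul] using
      Finset.sum_nonneg fun j hj ↦ mul_nonneg (hc j) (hv j hj)
  exact hφ.not_gt hx

theorem finrank_span_range_of_mem_span_tail {K M : Type*} [DivisionRing K] [AddCommGroup M]
    [Module K M] {n : ℕ} {v : Fin (n + 1) → M} (hv : LinearIndependent K (Fin.tail v))
    (h₀ : v 0 ∈ Submodule.span K (Set.range (Fin.tail v))) :
    Module.finrank K (Submodule.span K (Set.range v)) = n := by
  rw [Fin.range_fin_succ, Submodule.span_insert_eq_span h₀, finrank_span_eq_card hv,
    Fintype.card_fin]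

namespace voronoiCone1

theorem add_eq : voronoiCone1 0 + voronoiCone1 3 = voronoiCone1 1 + voronoiCone1 2 := by
  simp only [voronoiCone1, cons_val]
  ext i j
  fin_cases i <;> fin_cases j <;> norm_num

theorem zero_mem_span_tail :
    voronoiCone1 0 ∈ Submodule.span ℝ (Set.range (Fin.tail voronoiCone1)) := by
  rw [eq_sub_of_add_eq add_eq]
  exact sub_mem (add_mem (Submodule.subset_span ⟨0, rfl⟩) (Submodule.subset_span ⟨1, rfl⟩))
    (Submodule.subset_span ⟨2, rfl⟩)

theorem linearIndependent_tail : LinearIndependent ℝ (Fin.tail voronoiCone1) := by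
  rw [Fintype.linearIndependent_iff]
  intro g hg
  have h₁₃ : g 1 = 0 := by
    simpa [voronoiCone1, Fin.tail, Fin.sum_univ_three] using congrFun (congrFun hg 1) 3
  have h₂₃ : g 0 = 0 := by
    simpa [voronoiCone1, Fin.tail, Fin.sum_univ_three] using congrFun (congrFun hg 2) 3
  have h₃₃ : g 0 * 2 + g 1 * 2 + g 2 = 0 := by
    simpa [voronoiCone1, Fin.tail, Fin.sum_univ_three] using congrFun (congrFun hg 3) 3
  intro i
  fin_cases i <;> simp <;> linarith

/-- The kernel of `separatingFunctional i` contains the two generators other than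
`voronoiCone1 i` and the one opposite to it in `M₁ + M₄ = M₂ + M₃`; it is negative on
`voronoiCone1 i` and positive on its opposite. -/
noncomputable def separatingFunctional : Fin 4 → Matrix (Fin 5) (Fin 5) ℝ →ₗ[ℝ] ℝ :=
  let e := entryLinearMap ℝ ℝ (m := Fin 5) (n := Fin 5)
  ![e 3 3 + 2 • (e 1 3 + e 2 3), -(e 0 0 + 4 • e 1 3), -(e 0 0 + 4 • e 2 3), e 0 0 - e 3 3]

theorem separatingFunctional_self_neg (i : Fin 4) :
    separatingFunctional i (voronoiCone1 i) < 0 := by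
  fin_cases i <;> simp [separatingFunctional, voronoiCone1]
  norm_num

theorem separatingFunctional_nonneg {i j : Fin 4} (h : j ≠ i) :
    0 ≤ separatingFunctional i (voronoiCone1 j) := by
  fin_cases i <;> fin_cases j <;> simp [separatingFunctional, voronoiCone1] at h ⊢ <;> norm_num

end voronoiCone1

/-- The matrices `M₁, M₂, M₃, M₄` satisfy `M₁ + M₄ = M₂ + M₃`, their real span has
dimension exactly `3`, and none of them is a nonnegative real linear combination of
the other three: the cone `∑ᵢ ℝ₊ Mᵢ` is a `3`-dimensional non-simplicial polyhedral
cone. -/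
theorem voronoiCone1_non_simplicial :
    voronoiCone1 0 + voronoiCone1 3 = voronoiCone1 1 + voronoiCone1 2 ∧
    Module.finrank ℝ (Submodule.span ℝ (Set.range voronoiCone1)) = 3 ∧
    ∀ i : Fin 4, ¬ ∃ c : Fin 4 → ℝ, (∀ j, 0 ≤ c j) ∧
      voronoiCone1 i = ∑ j ∈ Finset.univ.erase i, c j • voronoiCone1 j := by
  refine ⟨voronoiCone1.add_eq, finrank_span_range_of_mem_span_tail
    voronoiCone1.linearIndependent_tail voronoiCone1.zero_mem_span_tail, fun i ↦ ?_⟩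
  exact not_exists_nonneg_combination_of_map_neg (voronoiCone1.separatingFunctional i)
    (voronoiCone1.separatingFunctional_self_neg i) fun j hj ↦
      voronoiCone1.separatingFunctional_nonneg (Finset.ne_of_mem_erase hj)
end
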